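/- The reduction relation of the FMC restricted to non-beta rules (Passage, Next, Prefix-pop, Prefix-push, Associate) is strongly normalizing. -/
import Mathlib


/-- Terms of the Functional Machine Calculus. -/
inductive Tm : Type
| var : ℕ → Tm
| pop : ℕ → ℕ → Tm → Tm      -- a<x>.M
| push : Tm → ℕ → Tm → Tm    -- [N]a.M
| skip : Tm
| seq : Tm → Tm → Tm
deriving DecidableEq

open Tm

/-- Free variables. -/
def fv : Tm → Finset ℕ
| Tm.var y => {y}
| Tm.pop _ y M => (fv M).erase y
| Tm.push N _ M => fv N ∪ fv M
| Tm.skip => ∅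
| Tm.seq M N => fv M ∪ fv N

/-- Substitution {N/x}M. -/
def subst (x : ℕ) (N : Tm) : Tm → Tm
| Tm.var y => if y = x then N else Tm.var y
| Tm.pop a y M => if y = x then Tm.pop a y M else Tm.pop a y (subst x N M)
| Tm.push P a M => Tm.push (subst x N P) a (subst x N M)
| Tm.skip => Tm.skip
| Tm.seq M P => Tm.seq (subst x N M) (subst x N P)

/-- A memory: a family of stacks of terms, indexed by locations. -/
abbrev Mem := ℕ → List Tm

def emptyMem : Mem := fun _ => []

/-- Push a term onto stack `a` of a memory. -/
def pushMem (S : Mem) (a : ℕ) (N : Tm) : Mem := Function.update S a (N :: S a)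

/-- Machine states: memory, term, continuation stack. -/
abbrev MState := Mem × Tm × List Tm

/-- Machine transitions. -/
inductive Step : MState → MState → Prop
| push : Step (S, Tm.push N a M, K) (pushMem S a N, M, K)
| pop  : Step (pushMem S a N, Tm.pop a x M, K) (S, subst x N M, K)
| seq  : Step (S, Tm.seq M N, K) (S, M, N :: K)
| skip : Step (S, Tm.skip, M :: K) (S, M, K)

/-- Runs, measured by the number of states traversed (length ≥ 1). -/
inductive Runs : ℕ → MState → MState → Prop
| single : Runs 1 s s
| step : Step s t → Runs n t u → Runs (n+1) s u

/-- Quantified big-step evaluation. -/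
inductive Eval : Mem → Tm → ℕ → Mem → Prop
| skip : Eval S Tm.skip 1 S
| seq : Eval R M m S → Eval S N n T → Eval R (Tm.seq M N) (m+n+1) T
| push : Eval (pushMem S a N) M n T → Eval S (Tm.push N a M) (n+1) T
| pop : Eval S (subst x N M) n T → Eval (pushMem S a N) (Tm.pop a x M) (n+1) T

/-- The six reduction rules. -/
inductive Rule : Tm → Tm → Prop
| beta : Rule (Tm.push N a (Tm.pop a x M)) (subst x N M)
| passage : a ≠ b → x ∉ fv N →
    Rule (Tm.push N b (Tm.pop a x M)) (Tm.pop a x (Tm.push N b M))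
| next : Rule (Tm.seq Tm.skip M) M
| prefixPop : x ∉ fv M → Rule (Tm.seq (Tm.pop a x N) M) (Tm.pop a x (Tm.seq N M))
| prefixPush : Rule (Tm.seq (Tm.push P a N) M) (Tm.push P a (Tm.seq N M))
| assoc : Rule (Tm.seq (Tm.seq P N) M) (Tm.seq P (Tm.seq N M))

/-- The beta rule alone. -/
inductive BetaRule : Tm → Tm → Prop
| beta : BetaRule (Tm.push N a (Tm.pop a x M)) (subst x N M)

/-- The five non-beta reduction rules. -/
inductive NBRule : Tm → Tm → Prop
| passage : a ≠ b → x ∉ fv N →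
    NBRule (Tm.push N b (Tm.pop a x M)) (Tm.pop a x (Tm.push N b M))
| next : NBRule (Tm.seq Tm.skip M) M
| prefixPop : x ∉ fv M → NBRule (Tm.seq (Tm.pop a x N) M) (Tm.pop a x (Tm.seq N M))
| prefixPush : NBRule (Tm.seq (Tm.push P a N) M) (Tm.push P a (Tm.seq N M))
| assoc : NBRule (Tm.seq (Tm.seq P N) M) (Tm.seq P (Tm.seq N M))

/-- Rules flagged by whether they are beta/next (weight-decreasing) steps. -/
inductive RuleK : Bool → Tm → Tm → Prop
| beta : RuleK true (Tm.push N a (Tm.pop a x M)) (subst x N M)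
| next : RuleK true (Tm.seq Tm.skip M) M
| passage : a ≠ b → x ∉ fv N →
    RuleK false (Tm.push N b (Tm.pop a x M)) (Tm.pop a x (Tm.push N b M))
| prefixPop : x ∉ fv M → RuleK false (Tm.seq (Tm.pop a x N) M) (Tm.pop a x (Tm.seq N M))
| prefixPush : RuleK false (Tm.seq (Tm.push P a N) M) (Tm.push P a (Tm.seq N M))
| assoc : RuleK false (Tm.seq (Tm.seq P N) M) (Tm.seq P (Tm.seq N M))

/-- Closure of a rule relation under all contexts. -/
inductive Clo (r : Tm → Tm → Prop) : Tm → Tm → Prop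
| base : r M N → Clo r M N
| pop : Clo r M N → Clo r (Tm.pop a x M) (Tm.pop a x N)
| pushBody : Clo r M N → Clo r (Tm.push P a M) (Tm.push P a N)
| pushArg : Clo r M N → Clo r (Tm.push M a P) (Tm.push N a P)
| seqL : Clo r M N → Clo r (Tm.seq M P) (Tm.seq N P)
| seqR : Clo r M N → Clo r (Tm.seq P M) (Tm.seq P N)

/-- Closure of a rule relation under spine contexts (no argument position). -/
inductive SpineClo (r : Tm → Tm → Prop) : Tm → Tm → Prop
| base : r M N → SpineClo r M N
| pop : SpineClo r M N → SpineClo r (Tm.pop a x M) (Tm.pop a x N)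
| pushBody : SpineClo r M N → SpineClo r (Tm.push P a M) (Tm.push P a N)
| seqL : SpineClo r M N → SpineClo r (Tm.seq M P) (Tm.seq N P)
| seqR : SpineClo r M N → SpineClo r (Tm.seq P M) (Tm.seq P N)

/-- Computation types: implications between memory types; a memory type assigns
to each location a vector (list) of collection types, a collection type being
a finite collection (list, read as multiset) of computation types. -/
inductive Ty : Type
| arr : (ℕ → List (List Ty)) → (ℕ → List (List Ty)) → Ty

abbrev Coll := List Ty
abbrev MemT := ℕ → List Coll

def emptyMT : MemT := fun _ => []

/-- Prepend collection ι at location a of a memory type. -/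
def consAt (a : ℕ) (ι : Coll) (κ : MemT) : MemT :=
  fun b => if b = a then ι :: κ b else κ b

/-- Typing contexts assign collection types to variables. -/
abbrev Ctx := ℕ → Coll

def emptyCtx : Ctx := fun _ => []
def ctxAdd (Γ Δ : Ctx) : Ctx := fun x => Γ x ++ Δ x
def singleCtx (x : ℕ) (ι : Coll) : Ctx := fun y => if y = x then ι else []

mutual
/-- Weak quantitative typing of terms, with weight. -/
inductive WT : Ctx → Tm → Ty → ℕ → Prop
| var : WT (singleCtx x [t]) (Tm.var x) t 0
| abs : WT Γ M (Ty.arr κ μ) n →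
    WT (Function.update Γ x []) (Tm.pop a x M) (Ty.arr (consAt a (Γ x) κ) μ) (n+1)
| app : WTC Γ N ι n → WT Δ M (Ty.arr (consAt a ι κ) μ) m →
    WT (ctxAdd Γ Δ) (Tm.push N a M) (Ty.arr κ μ) (n+m+1)
| unit : WT emptyCtx Tm.skip (Ty.arr ι ι) 1
| seq : WT Γ M (Ty.arr ι κ) n → WT Δ N (Ty.arr κ μ) m →
    WT (ctxAdd Γ Δ) (Tm.seq M N) (Ty.arr ι μ) (n+m+1)
/-- Weak typing of a term by a collection type (the collection rule). -/
inductive WTC : Ctx → Tm → Coll → ℕ → Prop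
| nil : WTC emptyCtx M [] 0
| cons : WT Γ M t n → WTC Δ M ts m → WTC (ctxAdd Γ Δ) M (t :: ts) (n+m)
end

mutual
/-- Strong quantitative typing of terms, with weight. -/
inductive StrT : Ctx → Tm → Ty → ℕ → Prop
| var : StrT (singleCtx x [t]) (Tm.var x) t 0
| abs : StrT Γ M (Ty.arr κ μ) n →
    StrT (Function.update Γ x []) (Tm.pop a x M) (Ty.arr (consAt a (Γ x) κ) μ) (n+1)
| app : StrTC Γ N ι n → StrT Δ M (Ty.arr (consAt a ι κ) μ) m → StrT E N t k →
    StrT (ctxAdd (ctxAdd Γ Δ) E) (Tm.push N a M) (Ty.arr κ μ) (n+m+k+1)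
| unit : StrT emptyCtx Tm.skip (Ty.arr ι ι) 1
| seq : StrT Γ M (Ty.arr ι κ) n → StrT Δ N (Ty.arr κ μ) m →
    StrT (ctxAdd Γ Δ) (Tm.seq M N) (Ty.arr ι μ) (n+m+1)
| weak : StrT Γ M t n → StrT (ctxAdd Γ Δ) M t n
/-- Strong typing of a term by a collection type. -/
inductive StrTC : Ctx → Tm → Coll → ℕ → Prop
| nil : StrTC emptyCtx M [] 0
| cons : StrT Γ M t n → StrTC Δ M ts m → StrTC (ctxAdd Γ Δ) M (t :: ts) (n+m)
end

/-- Weak typing of a single stack. -/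
inductive WStk : List Tm → List Coll → ℕ → Prop
| nil : WStk [] [] 0
| cons : WTC emptyCtx N ν n → WStk S ι m → WStk (N :: S) (ν :: ι) (n+m)

/-- Weak typing of a memory: each stack typed, with finitely-supported weights. -/
def WM (S : Mem) (ι : MemT) (n : ℕ) : Prop :=
  ∃ w : ℕ → ℕ, (∀ a, WStk (S a) (ι a) (w a)) ∧
    ∃ l : Finset ℕ, (∀ a ∉ l, w a = 0) ∧ n = ∑ a ∈ l, w a

/-- Weak typing of a continuation stack. -/
inductive WK : List Tm → Ty → ℕ → Prop
| nil : WK [] (Ty.arr ι ι) 0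
| cons : WT emptyCtx M (Ty.arr ι κ) n → WK K (Ty.arr κ μ) m →
    WK (M :: K) (Ty.arr ι μ) (n+m)

/-- Weak typing of a machine state, with type ε ⇒ μ⃗. -/
inductive WS : MState → MemT → ℕ → Prop
| mk : WM S ι n → WT emptyCtx M (Ty.arr ι κ) m → WK K (Ty.arr κ μ) k →
    WS (S, M, K) μ (n+m+k)

mutual
/-- Spine normal forms W. -/
inductive SpNF : Tm → Prop
| abs : SpNF M → SpNF (Tm.pop a x M)
| ofV : SpNFV M → SpNF M
/-- Spine normal forms V (those that are not abstractions). -/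
inductive SpNFV : Tm → Prop
| push : SpNFV M → SpNFV (Tm.push N a M)
| seq : SpNF M → SpNFV (Tm.seq (Tm.var x) M)
| var : SpNFV (Tm.var x)
| skip : SpNFV Tm.skip
end

mutual
/-- Normal forms of full reduction. -/
inductive NF : Tm → Prop
| abs : NF M → NF (Tm.pop a x M)
| ofV : NFV M → NF M
inductive NFV : Tm → Prop
| push : NF N → NFV M → NFV (Tm.push N a M)
| seq : NF M → NFV (Tm.seq (Tm.var x) M)
| var : NFV (Tm.var x)
| skip : NFV Tm.skip
end

/-- A weak head context of applications, applied to a term. -/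
def apps : List (Tm × ℕ) → Tm → Tm
| [], M => M
| (N, a) :: l, M => Tm.push N a (apps l M)

/-- The memory generated by executing a sequence of pushes. -/
def memOf (l : List (Tm × ℕ)) : Mem :=
  l.foldl (fun S p => pushMem S p.2 p.1) emptyMem

mutual
/-- Perpetual evaluation. -/
inductive Perp : Tm → Tm → Prop
| beta : Perp (apps l (subst x N M)) P → Perp N Q →
    Perp (apps l (Tm.push N a (Tm.pop a x M))) P
| passage : a ≠ b → x ∉ fv N →
    Perp (apps l (Tm.pop a x (Tm.push N b M))) P →
    Perp (apps l (Tm.push N b (Tm.pop a x M))) P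
| next : Perp (apps l M) P → Perp (apps l (Tm.seq Tm.skip M)) P
| prefixPop : x ∉ fv M → Perp (apps l (Tm.pop a x (Tm.seq N M))) P →
    Perp (apps l (Tm.seq (Tm.pop a x N) M)) P
| prefixPush : Perp (apps l (Tm.push Q a (Tm.seq N M))) P →
    Perp (apps l (Tm.seq (Tm.push Q a N) M)) P
| assoc : Perp (apps l (Tm.seq Q (Tm.seq N M))) P →
    Perp (apps l (Tm.seq (Tm.seq Q N) M)) P
| abs : Perp M P → Perp (Tm.pop a x M) (Tm.pop a x P)
| unit : PerpL l l' → Perp (apps l Tm.skip) (apps l' Tm.skip)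
| var : PerpL l l' → Perp (apps l (Tm.var x)) (apps l' (Tm.var x))
| seqvar : PerpL l l' → Perp M P →
    Perp (apps l (Tm.seq (Tm.var x) M)) (apps l' (Tm.seq (Tm.var x) P))
/-- Pointwise perpetual evaluation of weak head contexts. -/
inductive PerpL : List (Tm × ℕ) → List (Tm × ℕ) → Prop
| nil : PerpL [] []
| cons : Perp N P → PerpL l l' → PerpL ((N, a) :: l) ((P, a) :: l')
end

/-- Memories of dimension d (over a finite set of locations A). -/
def MemDim (A : Finset ℕ) : ℕ → Mem → Prop
| 0 => fun S => ∀ a ∉ A, S a = []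
| d+1 => fun S => (∀ a ∉ A, S a = []) ∧
    ∀ a ∈ A, d + 1 ≤ (S a).length ∧
      ∀ N ∈ S a, ∃ l, N = apps l Tm.skip ∧ MemDim A d (memOf l)

/-- Terms of dimension d: a sequence of pushes ending in skip generating a
memory of dimension d. -/
def TmDim (A : Finset ℕ) (d : ℕ) (M : Tm) : Prop :=
  ∃ l, M = apps l Tm.skip ∧ MemDim A d (memOf l)

/-- Simultaneous substitution by a substitution map. -/
def msubst (σ : ℕ → Tm) : Tm → Tm
| Tm.var y => σ y
| Tm.pop a y M => Tm.pop a y (msubst (Function.update σ y (Tm.var y)) M)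
| Tm.push N a M => Tm.push (msubst σ N) a (msubst σ M)
| Tm.skip => Tm.skip
| Tm.seq M N => Tm.seq (msubst σ M) (msubst σ N)
/-- Weight for non-beta SN. -/
def wt : Tm → ℕ
| Tm.var _ => 2
| Tm.pop _ _ M => wt M + 1
| Tm.push N _ M => wt N + 2 * wt M
| Tm.skip => 2
| Tm.seq M N => (wt M) ^ 2 * wt N

lemma wt_pos : ∀ M, 2 ≤ wt M := by
  intro M
  induction M with
  | var _ => simp [wt]
  | pop a x M ih => simp [wt]; omega
  | push N a M ihN ihM => simp [wt]; omega
  | skip => simp [wt]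
  | seq M N ihM ihN =>
    simp only [wt]
    calc 2 ≤ 2 ^ 2 * 2 := by norm_num
    _ ≤ (wt M) ^ 2 * wt N := by
        apply Nat.mul_le_mul _ ihN
        exact Nat.pow_le_pow_left ihM 2

lemma wt_rule : ∀ {M N}, NBRule M N → wt N < wt M := by
  intro M N h
  cases h with
  | passage hab hx => simp [wt]; omega
  | next =>
    simp only [wt]
    have := wt_pos N
    nlinarith
  | prefixPop hx =>
    rename_i Mq xq aq Nq
    simp only [wt]
    have h1 := wt_pos Mq
    have h2 := wt_pos Nq
    nlinarith
  | prefixPush =>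
    rename_i Pq aq Nq Mq
    simp only [wt]
    have h1 := wt_pos Mq
    have h2 := wt_pos Nq
    have h3 := wt_pos Pq
    have hpm : 2 * 2 ≤ wt Pq * wt Mq := Nat.mul_le_mul h3 h1
    nlinarith
  | assoc =>
    rename_i Pq Nq Mq
    simp only [wt]
    have h1 := wt_pos Mq
    have h2 := wt_pos Nq
    have h3 := wt_pos Pq
    have key : wt Pq ^ 2 * (wt Nq ^ 2) < (wt Pq ^ 2 * wt Nq) ^ 2 := by
      have h4 : wt Pq ^ 2 < (wt Pq ^ 2) ^ 2 := by
        have h5 : 1 < wt Pq ^ 2 := by nlinarith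
        calc wt Pq ^ 2 = 1 * wt Pq ^ 2 := (one_mul _).symm
          _ < wt Pq ^ 2 * wt Pq ^ 2 :=
              Nat.mul_lt_mul_of_lt_of_le h5 le_rfl (by omega)
          _ = (wt Pq ^ 2) ^ 2 := (sq _).symm
      calc wt Pq ^ 2 * wt Nq ^ 2 < (wt Pq ^ 2) ^ 2 * wt Nq ^ 2 :=
            Nat.mul_lt_mul_of_lt_of_le h4 le_rfl (pow_pos (by omega) 2)
        _ = (wt Pq ^ 2 * wt Nq) ^ 2 := by ring
    calc wt Pq ^ 2 * (wt Nq ^ 2 * wt Mq) = (wt Pq ^ 2 * wt Nq ^ 2) * wt Mq := by ring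
      _ < (wt Pq ^ 2 * wt Nq) ^ 2 * wt Mq :=
          Nat.mul_lt_mul_of_lt_of_le key le_rfl (by omega)

lemma wt_clo : ∀ {M N}, Clo NBRule M N → wt N < wt M := by
  intro M N h
  induction h with
  | base hr => exact wt_rule hr
  | pop _ ih => simp [wt]; omega
  | pushBody _ ih => simp [wt]; omega
  | pushArg _ ih => simp [wt]; omega
  | seqL h ih =>
    rename_i Mq Nq Pq
    simp only [wt]
    have h1 := wt_pos Pq
    exact Nat.mul_lt_mul_of_lt_of_le (Nat.pow_lt_pow_left ih (by norm_num)) le_rfl (by omega)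
  | seqR h ih =>
    rename_i Mq Nq Pq
    simp only [wt]
    have h1 := wt_pos Pq
    exact Nat.mul_lt_mul_of_le_of_lt le_rfl ih (pow_pos (by omega) 2)

/-- Non-beta reduction (Passage, Next, Prefix-pop, Prefix-push, Associate,
closed under all contexts) is strongly normalizing. -/
theorem nonBeta_SN : ∀ M : Tm, Acc (fun N M => Clo NBRule M N) M := by
  intro M
  have hwf : WellFounded (fun N M : Tm => wt N < wt M) :=
    InvImage.wf wt Nat.lt_wfRel.wf
  exact Subrelation.accessible (fun h => wt_clo h) (hwf.apply M)
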